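/- arXiv:2309.13440 — 4 statements merged into one kernel-verified Lean document; each statement's English description precedes it below -/
import Mathlib

section
/- For every g ∈ G the subspace V_g has dimension |G|^{n−1} over ℂ, and the rough boundary algebra 𝔇ⁿ_rough acts on V_g as the full endomorphism algebra: for every ℂ-linear endomorphism T of V_g there exists x ∈ 𝔇ⁿ_rough whose restriction to V_g equals T. -/
noncomputable section

open scoped BigOperators


section Aux

variable {G : Type} [Group G]

lemma listP1 : ∀ (l : List G) (i : ℕ) (a b : G) (hi : i + 1 < l.length),
    a * b = l[i] * l[i+1] → ((l.set i a).set (i+1) b).prod = l.prod := by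
  intro l
  induction l with
  | nil => intro i a b hi; simp at hi
  | cons c t ih =>
    intro i a b hi hab
    cases i with
    | zero =>
      match t, hi with
      | d :: t', _ =>
        simp only [List.set, List.prod_cons] at *
        simp only [List.getElem_cons_zero, List.getElem_cons_succ] at hab
        rw [← mul_assoc, hab, mul_assoc]

    | succ i' =>
      simp only [List.set, List.prod_cons]
      rw [ih i' a b (by simpa using hi) (by simpa using hab)]

lemma ofFn_update {n : ℕ} (y : Fin n → G) (i : Fin n) (a : G) [DecidableEq G] :
    List.ofFn (Function.update y i a) = (List.ofFn y).set (i : ℕ) a := by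
  apply List.ext_getElem
  · simp
  · intro k h1 h2
    simp only [List.getElem_ofFn, List.getElem_set]
    rw [Function.update_apply]
    simp only [List.length_ofFn] at h1
    by_cases hk : (i : ℕ) = k
    · have : (⟨k, h1⟩ : Fin n) = i := by apply Fin.ext; simpa using hk.symm
      rw [if_pos this, if_pos hk]
    · have : (⟨k, h1⟩ : Fin n) ≠ i := by
        intro hc; apply hk; rw [← hc]
      rw [if_neg this, if_neg hk]

lemma prod_move {n : ℕ} [DecidableEq G] (y : Fin n → G) (i j : Fin n)
    (hij : (i : ℕ) + 1 = (j : ℕ)) (g : G) :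
    (List.ofFn (Function.update (Function.update y i (y i * g⁻¹)) j (g * y j))).prod
      = (List.ofFn y).prod := by
  rw [ofFn_update, ofFn_update, ← hij]
  have hlen : (i:ℕ) + 1 < (List.ofFn y).length := by
    rw [List.length_ofFn, hij]; exact j.isLt
  refine listP1 _ _ _ _ hlen ?_
  simp only [List.getElem_ofFn]
  have h1 : (⟨(i:ℕ), by omega⟩ : Fin n) = i := rfl
  have h2 : (⟨(i:ℕ)+1, by omega⟩ : Fin n) = j := by apply Fin.ext; simpa using hij
  rw [h1, h2]
  group

lemma prod_snoc {m : ℕ} (u : Fin m → G) (a : G) :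
    (List.ofFn (Fin.snoc u a)).prod = (List.ofFn u).prod * a := by
  rw [List.ofFn_succ']
  simp [List.prod_concat]

lemma eq_of_agree_tail {m : ℕ} (y z : Fin (m+1) → G)
    (hp : (List.ofFn y).prod = (List.ofFn z).prod)
    (h : ∀ i : Fin (m+1), 1 ≤ (i : ℕ) → y i = z i) : y = z := by
  have htail : (fun i : Fin m => y i.succ) = fun i : Fin m => z i.succ := by
    funext i; exact h i.succ (by simp [Fin.val_succ])
  rw [List.ofFn_succ, List.ofFn_succ, List.prod_cons, List.prod_cons, htail] at hp
  have h0 : y 0 = z 0 := mul_right_cancel hp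
  funext i
  rcases Nat.eq_zero_or_pos (i : ℕ) with h' | h'
  · have : i = 0 := by ext; exact h'
    rw [this]; exact h0
  · exact h i h'

end Aux


/-- The Hilbert space `H_n = ℂ[G]^{⊗ n}`, realized as functions `G^n → ℂ`;
the basis ket `|g₁,…,g_n⟩` is the indicator function of `(g₁,…,g_n)`. -/
abbrev Hn (G : Type) (n : ℕ) : Type := (Fin n → G) → ℂ

variable (G : Type) [Group G] [Fintype G] [DecidableEq G] (n : ℕ)

/-- Diagonal operator with diagonal entries `c` (in the ket basis). -/
def diagOp (c : (Fin n → G) → ℂ) : Module.End ℂ (Hn G n) where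
  toFun f := fun x => c x * f x
  map_add' f g := by funext x; simp only [Pi.add_apply]; ring
  map_smul' r f := by
    funext x
    simp only [Pi.smul_apply, smul_eq_mul, RingHom.id_apply]
    ring

/-- The operator sending the ket `|y⟩` to the ket `|σ y⟩`, where `τ = σ⁻¹`. -/
def permOp (τ : (Fin n → G) → (Fin n → G)) : Module.End ℂ (Hn G n) :=
  LinearMap.funLeft ℂ ℂ τ

/-- `P^h_i`: projection onto kets whose `i`-th label equals `h`. -/
def Pop (i : Fin n) (h : G) : Module.End ℂ (Hn G n) :=
  diagOp G n fun x => if x i = h then 1 else 0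

/-- `Q̃^{(g)}` at sites `i` and `j` (used with `j = i + 1`):
`|…, g_i, g_j, …⟩ ↦ |…, g_i g⁻¹, g g_j, …⟩`. -/
def Qop (i j : Fin n) (g : G) : Module.End ℂ (Hn G n) :=
  permOp G n fun x =>
    Function.update (Function.update x i (x i * g)) j (g⁻¹ * x j)

/-- Generators `P^h_i` and `Q̃^{(g)}_i` of the rough boundary algebra. -/
def roughGens : Set (Module.End ℂ (Hn G n)) :=
  {T | ∃ (i : Fin n) (h : G), T = Pop G n i h} ∪
  {T | ∃ (i j : Fin n) (g : G), (i : ℕ) + 1 = (j : ℕ) ∧ T = Qop G n i j g}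

/-- The rough boundary algebra `𝔇ⁿ_rough`. -/
def DRough : Subalgebra ℂ (Module.End ℂ (Hn G n)) :=
  Algebra.adjoin ℂ (roughGens G n)

/-- The basis ket `|y⟩ = |y₁,…,y_n⟩`. -/
def ket (y : Fin n → G) : Hn G n := fun x => if x = y then 1 else 0

/-- `V_g`: the span of the kets `|g₁,…,g_n⟩` with `g₁ g₂ ⋯ g_n = g`. -/
def Vg (g : G) : Submodule ℂ (Hn G n) :=
  Submodule.span ℂ {f | ∃ y : Fin n → G, (List.ofFn y).prod = g ∧ f = ket G n y}


section OpLemmas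

lemma ket_eq_single (y : Fin n → G) : ket G n y = Pi.single y 1 := by
  funext x; simp [ket, Pi.single_apply]

lemma diagOp_apply (c : (Fin n → G) → ℂ) (f : Hn G n) (x : Fin n → G) :
    diagOp G n c f x = c x * f x := rfl

lemma diagOp_one : diagOp G n 1 = 1 := by
  apply LinearMap.ext; intro f; funext x
  simp [diagOp_apply]

lemma diagOp_mul (c d : (Fin n → G) → ℂ) :
    diagOp G n c * diagOp G n d = diagOp G n (c * d) := by
  apply LinearMap.ext; intro f; funext x
  simp only [Module.End.mul_apply, diagOp_apply, Pi.mul_apply]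
  ring

lemma diagOp_list_prod (l : List ((Fin n → G) → ℂ)) :
    (l.map (diagOp G n)).prod = diagOp G n l.prod := by
  induction l with
  | nil => simp [diagOp_one]
  | cons c t ih => simp only [List.map_cons, List.prod_cons, ih, diagOp_mul]

lemma list_prod_apply {α : Type} (l : List (α → ℂ)) (x : α) :
    l.prod x = (l.map (fun f => f x)).prod := by
  induction l with
  | nil => rfl
  | cons c t ih => simp [List.prod_cons, ih]

/-- The projector onto the ket `|y⟩`. -/
def projKet (y : Fin n → G) : Module.End ℂ (Hn G n) := diagOp G n (ket G n y)

lemma projKet_eq (y : Fin n → G) :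
    projKet G n y = (List.ofFn fun i => Pop G n i (y i)).prod := by
  have h1 : (List.ofFn fun i => Pop G n i (y i))
      = (List.ofFn fun i => fun x : Fin n → G => if x i = y i then (1:ℂ) else 0).map
          (diagOp G n) := by
    rw [List.map_ofFn]; rfl
  rw [h1, diagOp_list_prod]
  unfold projKet
  congr 1
  funext x
  rw [list_prod_apply, List.map_ofFn]
  by_cases hxy : x = y
  · subst hxy
    rw [ket, if_pos rfl]
    symm
    apply List.prod_eq_one
    intro a ha
    rw [List.mem_ofFn] at ha
    obtain ⟨i, rfl⟩ := ha
    simp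
  · obtain ⟨i, hi⟩ := Function.ne_iff.mp hxy
    have hmem : (0:ℂ) ∈ List.ofFn ((fun f : (Fin n → G) → ℂ => f x) ∘
        fun i => fun x : Fin n → G => if x i = y i then (1:ℂ) else 0) := by
      rw [List.mem_ofFn]
      exact ⟨i, by simp [hi]⟩
    rw [List.prod_eq_zero hmem, ket, if_neg hxy]

lemma projKet_mem (y : Fin n → G) : projKet G n y ∈ DRough G n := by
  rw [projKet_eq]
  apply Subalgebra.list_prod_mem
  intro x hx
  rw [List.mem_ofFn] at hx
  obtain ⟨i, rfl⟩ := hx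
  exact Algebra.subset_adjoin (Or.inl ⟨i, y i, rfl⟩)

lemma diagOp_ket (c : (Fin n → G) → ℂ) (w : Fin n → G) :
    diagOp G n c (ket G n w) = c w • ket G n w := by
  funext x
  simp only [diagOp_apply, Pi.smul_apply, smul_eq_mul, ket]
  by_cases hxw : x = w
  · subst hxw; simp
  · simp [hxw]

lemma projKet_ket (y w : Fin n → G) :
    projKet G n y (ket G n w) = if w = y then ket G n y else 0 := by
  rw [projKet, diagOp_ket]
  by_cases hwy : w = y
  · subst hwy; simp [ket]
  · simp [ket, hwy, Ne.symm hwy]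

/-- The combinatorial move underlying `Qop`. -/
def move (i j : Fin n) (g : G) (y : Fin n → G) : Fin n → G :=
  Function.update (Function.update y i (y i * g⁻¹)) j (g * y j)

lemma move_at_j (i j : Fin n) (g : G) (y : Fin n → G) : move G n i j g y j = g * y j := by
  simp [move]

lemma move_at_i (i j : Fin n) (hne : i ≠ j) (g : G) (y : Fin n → G) :
    move G n i j g y i = y i * g⁻¹ := by
  simp [move, Function.update_of_ne hne]

lemma move_at_other (i j k : Fin n) (hki : k ≠ i) (hkj : k ≠ j) (g : G) (y : Fin n → G) :
    move G n i j g y k = y k := by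
  simp [move, Function.update_of_ne hki, Function.update_of_ne hkj]

lemma move_move (i j : Fin n) (hne : i ≠ j) (g : G) (y : Fin n → G) :
    move G n i j g (move G n i j g⁻¹ y) = y := by
  funext k
  rcases eq_or_ne k j with rfl | hkj
  · rw [move_at_j, move_at_j]
    group
  · rcases eq_or_ne k i with rfl | hki
    · rw [move_at_i _ _ _ _ hne, move_at_i _ _ _ _ hne]
      group
    · rw [move_at_other _ _ _ _ _ hki hkj, move_at_other _ _ _ _ _ hki hkj]

lemma prod_move' (i j : Fin n) (hij : (i : ℕ) + 1 = (j : ℕ)) (g : G) (y : Fin n → G) :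
    (List.ofFn (move G n i j g y)).prod = (List.ofFn y).prod :=
  prod_move y i j hij g

lemma Qop_ket (i j : Fin n) (hij : (i : ℕ) + 1 = (j : ℕ)) (g : G) (y : Fin n → G) :
    Qop G n i j g (ket G n y) = ket G n (move G n i j g y) := by
  have hne : i ≠ j := by
    intro h; rw [h] at hij; omega
  have htau : ∀ x : Fin n → G,
      Function.update (Function.update x i (x i * g)) j (g⁻¹ * x j) = move G n i j g⁻¹ x := by
    intro x
    unfold move
    rw [inv_inv]
  funext x
  show ket G n y (Function.update (Function.update x i (x i * g)) j (g⁻¹ * x j)) = _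
  rw [htau]
  unfold ket
  congr 1
  simp only [eq_iff_iff]
  constructor
  · intro h
    have := congrArg (move G n i j g) h
    rw [move_move _ _ i j hne g x] at this
    rw [this]
  · intro h
    rw [h]
    have := move_move G n i j hne g⁻¹ y
    rw [inv_inv] at this
    rw [this]

lemma Qop_mem (i j : Fin n) (hij : (i : ℕ) + 1 = (j : ℕ)) (g : G) :
    Qop G n i j g ∈ DRough G n :=
  Algebra.subset_adjoin (Or.inr ⟨i, j, g, hij, rfl⟩)

/-- Transitivity: kets with the same product are connected by `DRough`. -/
lemma reach : ∀ (k : ℕ) (y z : Fin n → G),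
    (List.ofFn y).prod = (List.ofFn z).prod →
    (∀ i : Fin n, k ≤ (i : ℕ) → y i = z i) →
    ∃ U ∈ DRough G n, U (ket G n y) = ket G n z := by
  intro k
  induction k with
  | zero =>
    intro y z _ h
    have hyz : y = z := funext fun i => h i (Nat.zero_le _)
    exact ⟨1, one_mem _, by rw [hyz]; rfl⟩
  | succ k ih =>
    intro y z hp h
    by_cases hkn : k < n
    · rcases Nat.eq_zero_or_pos k with rfl | hk1
      · obtain ⟨m, rfl⟩ : ∃ m, n = m + 1 := ⟨n - 1, by omega⟩
        have hyz : y = z := eq_of_agree_tail y z hp h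
        exact ⟨1, one_mem _, by rw [hyz]; rfl⟩
      · set i1 : Fin n := ⟨k, hkn⟩ with hi1
        set i0 : Fin n := ⟨k - 1, by omega⟩ with hi0
        have hij : (i0 : ℕ) + 1 = (i1 : ℕ) := by
          simp only [hi0, hi1]; omega
        set g0 : G := z i1 * (y i1)⁻¹ with hg0
        set y' := move G n i0 i1 g0 y with hy'
        have h1 : (List.ofFn y').prod = (List.ofFn z).prod := by
          rw [hy', prod_move' G n i0 i1 hij]; exact hp
        have h2 : ∀ i : Fin n, k ≤ (i : ℕ) → y' i = z i := by
          intro i hi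
          rcases eq_or_ne i i1 with rfl | hne1
          · rw [hy', move_at_j, hg0]
            group
          · have hne0 : i ≠ i0 := by
              intro hc
              rw [hc] at hi
              simp only [hi0] at hi
              omega
            rw [hy', move_at_other _ _ _ _ _ hne0 hne1]
            apply h i
            have : (i : ℕ) ≠ k := by
              intro hc
              exact hne1 (Fin.ext (by simp [hi1, hc]))
            omega
        obtain ⟨U, hU, hUk⟩ := ih y' z h1 h2
        refine ⟨U * Qop G n i0 i1 g0, mul_mem hU (Qop_mem G n i0 i1 hij g0), ?_⟩
        rw [Module.End.mul_apply, Qop_ket G n i0 i1 hij, ← hy', hUk]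
    · exact ih y z hp fun i hi => absurd i.isLt (by omega)

end OpLemmas

section Main

/-- Index type for the ket basis of `V_g`. -/
abbrev KS (g : G) := {y : Fin n → G // (List.ofFn y).prod = g}

/-- The ket family spanning `V_g`. -/
def famKet (g : G) : KS G n g → Hn G n := fun s => ket G n s.val

lemma famKet_li (g : G) : LinearIndependent ℂ (famKet G n g) := by
  have h2 : famKet G n g = (fun y : Fin n → G => (Pi.basisFun ℂ (Fin n → G)) y) ∘
      Subtype.val := by
    funext s
    rw [Function.comp_apply, Pi.basisFun_apply, famKet, ket_eq_single]
  rw [h2]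
  exact (Pi.basisFun ℂ (Fin n → G)).linearIndependent.comp Subtype.val Subtype.val_injective

lemma Vg_eq_span (g : G) :
    Vg G n g = Submodule.span ℂ (Set.range (famKet G n g)) := by
  unfold Vg
  congr 1
  ext f
  constructor
  · rintro ⟨y, hy, rfl⟩; exact ⟨⟨y, hy⟩, rfl⟩
  · rintro ⟨s, rfl⟩; exact ⟨s.1, s.2, rfl⟩

lemma card_KS (hn : 1 ≤ n) (g : G) :
    Fintype.card (KS G n g) = Fintype.card G ^ (n - 1) := by
  obtain ⟨m, rfl⟩ : ∃ m, n = m + 1 := ⟨n - 1, by omega⟩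
  have e : KS G (m+1) g ≃ (Fin m → G) :=
    { toFun := fun s => Fin.init s.val
      invFun := fun u => ⟨Fin.snoc u ((List.ofFn u).prod⁻¹ * g), by
        rw [prod_snoc]; group⟩
      left_inv := fun s => by
        apply Subtype.ext
        have h2 : (List.ofFn s.val).prod
            = (List.ofFn (Fin.init s.val)).prod * s.val (Fin.last m) := by
          conv_lhs => rw [← Fin.snoc_init_self s.val]
          rw [prod_snoc]
        have h3 : s.val (Fin.last m) = (List.ofFn (Fin.init s.val)).prod⁻¹ * g := by
          have hs := s.2
          rw [h2] at hs
          rw [eq_inv_mul_iff_mul_eq]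
          exact hs
        show Fin.snoc (Fin.init s.val) _ = s.val
        rw [← h3, Fin.snoc_init_self]
      right_inv := fun u => by simp }
  rw [Fintype.card_congr e]
  simp

end Main

/-- each `V_g` has dimension `|G|^(n-1)`, and `𝔇ⁿ_rough` acts on `V_g`
as the full endomorphism algebra. -/
theorem stmt1 (hn : 1 ≤ n) (g : G) :
    Module.finrank ℂ ↥(Vg G n g) = Fintype.card G ^ (n - 1) ∧
    ∀ T : ↥(Vg G n g) →ₗ[ℂ] ↥(Vg G n g),
      ∃ x ∈ DRough G n, ∀ v : ↥(Vg G n g), x (v : Hn G n) = ((T v : ↥(Vg G n g)) : Hn G n) := by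
  classical
  rw [Vg_eq_span]
  constructor
  · rw [finrank_span_eq_card (famKet_li G n g)]
    exact card_KS G n hn g
  · intro T
    set b := Module.Basis.span (famKet_li G n g) with hb
    have trans : ∀ s t : KS G n g, ∃ U ∈ DRough G n,
        U (ket G n s.val) = ket G n t.val := by
      intro s t
      exact reach G n n s.val t.val (by rw [s.2, t.2]) (fun i hi => absurd i.isLt (by omega))
    choose U hUmem hUact using trans
    have coe_sum : ∀ (f : KS G n g → ↥(Submodule.span ℂ (Set.range (famKet G n g)))),
        ((∑ s : KS G n g, f s : ↥(Submodule.span ℂ (Set.range (famKet G n g)))) : Hn G n)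
          = ∑ s : KS G n g, (f s : Hn G n) := by
      intro f
      exact map_sum (Submodule.subtype _) f Finset.univ
    have hbs : ∀ s : KS G n g, (b s : Hn G n) = ket G n s.val := by
      intro s
      rw [hb, Module.Basis.span_apply]
      rfl
    refine ⟨∑ s : KS G n g, ∑ t : KS G n g,
      (b.repr (T (b s)) t) • (U s t * projKet G n s.val), ?_, ?_⟩
    · apply sum_mem; intro s _
      apply sum_mem; intro t _
      exact Subalgebra.smul_mem _ (mul_mem (hUmem s t) (projKet_mem G n s.val)) _
    · have hxket : ∀ s' : KS G n g,
          (∑ s : KS G n g, ∑ t : KS G n g,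
            (b.repr (T (b s)) t) • (U s t * projKet G n s.val)) (ket G n s'.val)
          = ((T (b s')) : Hn G n) := by
        intro s'
        rw [LinearMap.sum_apply]
        have hterm : ∀ s : KS G n g, s ∈ (Finset.univ : Finset (KS G n g)) →
            (∑ t : KS G n g, (b.repr (T (b s)) t) • (U s t * projKet G n s.val))
              (ket G n s'.val)
            = if s = s' then ((T (b s')) : Hn G n) else 0 := by
          intro s _
          rw [LinearMap.sum_apply]
          by_cases hss : s = s'
          · subst hss
            rw [if_pos rfl]
            have hterm2 : ∀ t : KS G n g, t ∈ (Finset.univ : Finset (KS G n g)) →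
                ((b.repr (T (b s)) t) • (U s t * projKet G n s.val)) (ket G n s.val)
                  = (b.repr (T (b s)) t) • ket G n t.val := by
              intro t _
              rw [LinearMap.smul_apply, Module.End.mul_apply, projKet_ket, if_pos rfl, hUact]
            rw [Finset.sum_congr rfl hterm2]
            have h4 := b.sum_repr (T (b s))
            calc ∑ t : KS G n g, (b.repr (T (b s)) t) • ket G n t.val
                = ∑ t : KS G n g, ((b.repr (T (b s)) t • b t :
                    ↥(Submodule.span ℂ (Set.range (famKet G n g)))) : Hn G n) := by
                  refine Finset.sum_congr rfl fun t _ => ?_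
                  rw [Submodule.coe_smul, hbs]
              _ = ((∑ t : KS G n g, b.repr (T (b s)) t • b t :
                    ↥(Submodule.span ℂ (Set.range (famKet G n g)))) : Hn G n) := by
                  rw [coe_sum]
              _ = ((T (b s)) : Hn G n) := by rw [h4]
          · rw [if_neg hss]
            apply Finset.sum_eq_zero
            intro t _
            rw [LinearMap.smul_apply, Module.End.mul_apply, projKet_ket,
              if_neg (fun hc => hss (Subtype.ext hc.symm)), map_zero, smul_zero]
        rw [Finset.sum_congr rfl hterm]
        simp
      intro v
      have hv := b.sum_repr v
      have hv' : (v : Hn G n) = ∑ s : KS G n g, b.repr v s • ket G n s.val := by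
        conv_lhs => rw [← hv]
        rw [coe_sum]
        refine Finset.sum_congr rfl fun s _ => ?_
        rw [Submodule.coe_smul, hbs]
      rw [hv', map_sum]
      simp_rw [map_smul, hxket]
      conv_rhs => rw [← hv]
      rw [map_sum, coe_sum]
      refine Finset.sum_congr rfl fun s _ => ?_
      rw [map_smul, Submodule.coe_smul]
end
end

section
/- The rough boundary algebra 𝔇ⁿ_rough is exactly the algebra of G-graded endomorphisms of H_n: an endomorphism T of H_n lies in 𝔇ⁿ_rough if and only if T(V_g) ⊆ V_g for every g ∈ G. (This identifies 𝔇ⁿ_rough with End_{Hilb(G)}(ℂ[G]^{⊗n}).) -/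
noncomputable section

open scoped BigOperators

variable (G : Type) [Group G] [Fintype G] [DecidableEq G] (n : ℕ)

namespace Stmt2Aux

/-- A list's product split around two adjacent positions. -/
lemma prod_split {M : Type*} [Monoid M] (l : List M) (i : ℕ) (h : i + 1 < l.length) :
    l.prod = (l.take i).prod * (l[i] * (l[i+1] * (l.drop (i+2)).prod)) := by
  have h1 : i < l.length := by omega
  conv_lhs => rw [← List.prod_take_mul_prod_drop l i]
  rw [List.drop_eq_getElem_cons h1, List.prod_cons,
    List.drop_eq_getElem_cons h, List.prod_cons]

lemma ofFn_update {α : Type*} {n : ℕ} [DecidableEq α] (x : Fin n → α) (i : Fin n) (a : α) :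
    List.ofFn (Function.update x i a) = (List.ofFn x).set i a := by
  apply List.ext_getElem
  · simp
  · intro k h1 h2
    simp only [List.getElem_ofFn, List.getElem_set, List.getElem_ofFn]
    rcases eq_or_ne ((i : ℕ)) k with h | h
    · simp only [h, if_pos rfl]
      have : (⟨k, by simpa using h1⟩ : Fin n) = i := by
        apply Fin.ext; simp [h]
      rw [this, Function.update_self]; simp
    · rw [if_neg h, Function.update_of_ne]
      intro hk
      exact h (by rw [← hk])

/-- The key product lemma: updating two adjacent entries while preserving their
product preserves the list product. -/
lemma prod_update_pair {G : Type*} [Monoid G] [DecidableEq G] {n : ℕ} (x : Fin n → G)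
    (i j : Fin n) (hij : (i : ℕ) + 1 = (j : ℕ)) (a b : G) (hab : a * b = x i * x j) :
    (List.ofFn (Function.update (Function.update x i a) j b)).prod = (List.ofFn x).prod := by
  have hji : i ≠ j := by intro h; rw [h] at hij; omega
  have hlen : (i : ℕ) + 1 < (List.ofFn x).length := by simp; omega
  rw [ofFn_update, ofFn_update]
  have hlen' : (i : ℕ) + 1 < (((List.ofFn x).set i a).set j b).length := by simpa using hlen
  rw [prod_split _ i hlen', prod_split _ i hlen]
  have e1 : (((List.ofFn x).set i a).set j b).take i = (List.ofFn x).take i := by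
    apply List.ext_getElem
    · simp
    · intro k h1 h2
      simp only [List.getElem_take, List.getElem_set, List.getElem_ofFn]
      have hk : k < (i : ℕ) := by simpa using h1
      rw [if_neg (by omega), if_neg (by omega)]
  have e2 : (((List.ofFn x).set i a).set j b).drop ((i : ℕ)+2) = (List.ofFn x).drop ((i : ℕ)+2) := by
    apply List.ext_getElem
    · simp
    · intro k h1 h2
      simp only [List.getElem_drop, List.getElem_set]
      rw [if_neg (by omega), if_neg (by omega)]
  have e3 : (((List.ofFn x).set i a).set j b)[(i:ℕ)] = a := by
    rw [List.getElem_set, if_neg (by omega), List.getElem_set, if_pos rfl]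
  have e4 : (((List.ofFn x).set i a).set j b)[(i:ℕ)+1] = b := by
    rw [List.getElem_set, if_pos hij.symm]
  have e5 : (List.ofFn x)[(i:ℕ)] = x i := by simp
  have e6 : (List.ofFn x)[(i:ℕ)+1] = x j := by
    simp only [List.getElem_ofFn]
    congr 1
    exact Fin.ext (by simp [hij])
  rw [e1, e2, e3, e4, e5, e6]
  congr 1
  rw [← mul_assoc, ← mul_assoc, hab]

/-- If two tuples agree except possibly in the last coordinate and have equal
products, they are equal. -/
lemma eq_of_prod_eq {G : Type*} [Group G] {n : ℕ} (x y : Fin (n+1) → G)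
    (hp : (List.ofFn x).prod = (List.ofFn y).prod)
    (h : ∀ m : Fin (n+1), (m : ℕ) < n → x m = y m) : x = y := by
  have hc : ∀ m : Fin n, x m.castSucc = y m.castSucc := fun m => h _ (by simp)
  have hinit : (List.ofFn fun i : Fin n => x i.castSucc) = (List.ofFn fun i : Fin n => y i.castSucc) := by
    congr 1; funext m; exact hc m
  rw [List.ofFn_succ' x, List.ofFn_succ' y, List.prod_concat, List.prod_concat, hinit] at hp
  have hlast : x (Fin.last n) = y (Fin.last n) := mul_left_cancel hp
  funext m
  rcases eq_or_ne (m : ℕ) n with hm | hm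
  · have : m = Fin.last n := Fin.ext hm
    rw [this]; exact hlast
  · exact h m (by omega)

end Stmt2Aux
set_option linter.unusedSectionVars false
namespace Stmt2Aux
variable {G : Type} [Group G] [Fintype G] [DecidableEq G] {n : ℕ}

lemma expand (f : Hn G n) : f = ∑ y : Fin n → G, f y • ket G n y := by
  funext z
  simp only [Finset.sum_apply, Pi.smul_apply, ket, smul_eq_mul, mul_ite, mul_one, mul_zero]
  rw [Finset.sum_ite_eq (Finset.univ) z f]
  simp

lemma ket_mem_Vg (y : Fin n → G) : ket G n y ∈ Vg G n ((List.ofFn y).prod) :=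
  Submodule.subset_span ⟨y, rfl, rfl⟩

lemma Vg_mem_iff (g : G) (f : Hn G n) :
    f ∈ Vg G n g ↔ ∀ x : Fin n → G, (List.ofFn x).prod ≠ g → f x = 0 := by
  constructor
  · intro hf
    induction hf using Submodule.span_induction with
    | mem v hv =>
      obtain ⟨y, hy, rfl⟩ := hv
      intro x hx
      have : x ≠ y := fun h => hx (by rw [h, hy])
      simp [ket, this]
    | zero => simp
    | add u v _ _ hu hv => intro x hx; simp [hu x hx, hv x hx]
    | smul c v _ hv => intro x hx; simp [hv x hx]
  · intro hf
    rw [expand f]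
    apply Submodule.sum_mem
    intro y _
    by_cases hy : f y = 0
    · simp [hy]
    · have hp : (List.ofFn y).prod = g := by
        by_contra hc
        exact hy (hf y hc)
      exact Submodule.smul_mem _ _ (hp ▸ ket_mem_Vg y)

end Stmt2Aux
namespace Stmt2Aux

/-- The subalgebra of graded endomorphisms. -/
def gradedSub (G : Type) [Group G] [Fintype G] [DecidableEq G] (n : ℕ) :
    Subalgebra ℂ (Module.End ℂ (Hn G n)) where
  carrier := {T | ∀ g : G, ∀ v ∈ Vg G n g, T v ∈ Vg G n g}
  mul_mem' := by
    intro S T hS hT g v hv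
    rw [Module.End.mul_apply]
    exact hS g _ (hT g v hv)
  add_mem' := by
    intro S T hS hT g v hv
    rw [LinearMap.add_apply]
    exact Submodule.add_mem _ (hS g v hv) (hT g v hv)
  algebraMap_mem' := by
    intro c g v hv
    rw [Module.algebraMap_end_apply]
    exact Submodule.smul_mem _ _ hv

variable {G : Type} [Group G] [Fintype G] [DecidableEq G] {n : ℕ}

lemma Qop_apply (i j : Fin n) (g : G) (f : Hn G n) (x : Fin n → G) :
    Qop G n i j g f x = f (Function.update (Function.update x i (x i * g)) j (g⁻¹ * x j)) := rfl

lemma Pop_apply (i : Fin n) (h : G) (f : Hn G n) (x : Fin n → G) :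
    Pop G n i h f x = (if x i = h then 1 else 0) * f x := rfl

lemma tau_sigma (i j : Fin n) (hne : i ≠ j) (g : G) (z : Fin n → G) :
    (let y := Function.update (Function.update z i (z i * g⁻¹)) j (g * z j);
      Function.update (Function.update y i (y i * g)) j (g⁻¹ * y j)) = z := by
  funext k
  simp only [Function.update_apply]
  split_ifs with h1 h2 <;>
    simp_all [Function.update_apply, hne, inv_mul_cancel_left, inv_mul_cancel_right]

lemma sigma_tau (i j : Fin n) (hne : i ≠ j) (g : G) (z : Fin n → G) :
    (let y := Function.update (Function.update z i (z i * g)) j (g⁻¹ * z j);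
      Function.update (Function.update y i (y i * g⁻¹)) j (g * y j)) = z := by
  funext k
  simp only [Function.update_apply]
  split_ifs with h1 h2 <;>
    simp_all [Function.update_apply, hne, mul_inv_cancel_left, mul_inv_cancel_right]

lemma Qop_ket (i j : Fin n) (hne : i ≠ j) (g : G) (y : Fin n → G) :
    Qop G n i j g (ket G n y) =
      ket G n (Function.update (Function.update y i (y i * g⁻¹)) j (g * y j)) := by
  funext x
  rw [Qop_apply]
  show (if _ = y then (1:ℂ) else 0) = if x = _ then 1 else 0
  congr 1
  apply propext
  constructor
  · rintro rfl
    exact (sigma_tau i j hne g x).symm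
  · rintro rfl
    exact tau_sigma i j hne g y

end Stmt2Aux
namespace Stmt2Aux
variable {G : Type} [Group G] [Fintype G] [DecidableEq G] {n : ℕ}

lemma diagOp_mul (c d : (Fin n → G) → ℂ) :
    diagOp G n c * diagOp G n d = diagOp G n (c * d) := by
  apply LinearMap.ext; intro f; funext x
  simp [diagOp, Module.End.mul_apply, mul_assoc]

lemma diagOp_one : (diagOp G n 1) = 1 := by
  apply LinearMap.ext; intro f; funext x
  simp [diagOp]

lemma indProd (y x : Fin n → G) :
    (∏ i : Fin n, if x i = y i then (1:ℂ) else 0) = if x = y then 1 else 0 := by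
  by_cases h : x = y
  · subst h; simp
  · rw [if_neg h]
    obtain ⟨i, hi⟩ : ∃ i, x i ≠ y i := by
      by_contra hc
      push_neg at hc
      exact h (funext hc)
    exact Finset.prod_eq_zero (Finset.mem_univ i) (by simp [hi])

lemma diag_list_prod (l : List ((Fin n → G) → ℂ)) :
    (l.map (diagOp G n)).prod = diagOp G n (fun x => (l.map (fun c => c x)).prod) := by
  induction l with
  | nil =>
    simp only [List.map_nil, List.prod_nil]
    apply LinearMap.ext; intro f; funext x
    simp [diagOp]
  | cons c l ih =>
    simp only [List.map_cons, List.prod_cons, ih, diagOp_mul]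
    rfl

lemma prod_diag (y : Fin n → G) :
    (List.ofFn fun i : Fin n => diagOp G n (fun x => if x i = y i then 1 else 0)).prod =
      diagOp G n (fun x => if x = y then 1 else 0) := by
  have h1 : (List.ofFn fun i : Fin n => diagOp G n (fun x => if x i = y i then 1 else 0))
      = (List.ofFn fun i : Fin n => (fun x => if x i = y i then (1:ℂ) else 0)).map (diagOp G n) := by
    rw [List.map_ofFn]; rfl
  rw [h1, diag_list_prod]
  congr 1
  funext x
  rw [List.map_ofFn]
  have : (List.ofFn ((fun c : (Fin n → G) → ℂ => c x) ∘ fun i : Fin n => fun z => if z i = y i then (1:ℂ) else 0)).prod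
      = ∏ i : Fin n, if x i = y i then (1:ℂ) else 0 := by
    rw [List.prod_ofFn]; rfl
  rw [this, indProd]

end Stmt2Aux
namespace Stmt2Aux
variable {G : Type} [Group G] [Fintype G] [DecidableEq G] {n : ℕ}

lemma prod_tau (i j : Fin n) (hij : (i : ℕ) + 1 = (j : ℕ)) (g : G) (x : Fin n → G) :
    (List.ofFn (Function.update (Function.update x i (x i * g)) j (g⁻¹ * x j))).prod
      = (List.ofFn x).prod := by
  apply prod_update_pair x i j hij
  rw [mul_assoc, mul_inv_cancel_left]

lemma prod_sigma (i j : Fin n) (hij : (i : ℕ) + 1 = (j : ℕ)) (g : G) (y : Fin n → G) :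
    (List.ofFn (Function.update (Function.update y i (y i * g⁻¹)) j (g * y j))).prod
      = (List.ofFn y).prod := by
  apply prod_update_pair y i j hij
  rw [mul_assoc, inv_mul_cancel_left]

lemma gens_graded : roughGens G n ⊆ (gradedSub G n : Set (Module.End ℂ (Hn G n))) := by
  rintro T (⟨i, h, rfl⟩ | ⟨i, j, g, hij, rfl⟩) <;> intro g0 v hv <;>
    rw [Vg_mem_iff] at hv ⊢ <;> intro x hx
  · rw [Pop_apply, hv x hx, mul_zero]
  · rw [Qop_apply]
    exact hv _ (by rwa [prod_tau i j hij g x])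

/-- forward direction -/
lemma forward : DRough G n ≤ gradedSub G n :=
  Algebra.adjoin_le gens_graded

/-- The rank-one operator `|x⟩⟨y|`. -/
def Exy (x y : Fin n → G) : Module.End ℂ (Hn G n) where
  toFun f := f y • ket G n x
  map_add' f g := by simp [add_smul]
  map_smul' c f := by simp [mul_smul]

lemma Exy_apply (x y : Fin n → G) (f : Hn G n) : Exy x y f = f y • ket G n x := rfl

lemma Exy_diag (y : Fin n → G) :
    Exy y y = diagOp G n (fun x => if x = y then 1 else 0) := by
  apply LinearMap.ext; intro f; funext x
  show f y * ket G n y x = (if x = y then 1 else 0) * f x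
  by_cases h : x = y
  · subst h; simp [ket]
  · simp [ket, h]

lemma Pop_eq_diag (i : Fin n) (h : G) :
    Pop G n i h = diagOp G n (fun x => if x i = h then 1 else 0) := rfl

lemma Eyy_mem (y : Fin n → G) : Exy y y ∈ DRough G n := by
  rw [Exy_diag, ← prod_diag y]
  apply list_prod_mem
  intro a ha
  rw [List.mem_ofFn] at ha
  obtain ⟨i, rfl⟩ := ha
  exact Algebra.subset_adjoin (Or.inl ⟨i, y i, rfl⟩)

lemma Qop_mem (i j : Fin n) (hij : (i : ℕ) + 1 = (j : ℕ)) (g : G) :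
    Qop G n i j g ∈ DRough G n :=
  Algebra.subset_adjoin (Or.inr ⟨i, j, g, hij, rfl⟩)

/-- Reachability: any two kets in the same graded piece are connected by an
element of the algebra. -/
lemma reach (d : ℕ) : ∀ x y : Fin n → G, (List.ofFn x).prod = (List.ofFn y).prod →
    (∀ m : Fin n, (m : ℕ) + d < n → x m = y m) →
    ∃ U ∈ DRough G n, U (ket G n y) = ket G n x := by
  induction d with
  | zero =>
    intro x y _ hagree
    have : x = y := funext fun m => hagree m (by omega)
    exact ⟨1, Subalgebra.one_mem _, by rw [this, Module.End.one_apply]⟩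
  | succ d ih =>
    intro x y hp hagree
    by_cases hnd : n ≤ d
    · exact ih x y hp (fun m hm => absurd hm (by omega))
    rcases Nat.eq_zero_or_pos d with hd | hd
    · -- d = 0 : x and y agree except possibly at the last coordinate
      subst hd
      rcases Nat.eq_zero_or_pos n with hn | hn
      · exact ih x y hp (fun m _ => absurd m.isLt (by omega))
      obtain ⟨n', rfl⟩ : ∃ n', n = n' + 1 := ⟨n - 1, by omega⟩
      have hxy : x = y := eq_of_prod_eq x y hp (fun m hm => hagree m (by omega))
      exact ih x y hp (fun m _ => by rw [hxy])
    · -- 1 ≤ d < n : perform a move at sites (n-d-1, n-d)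
      set c : Fin n := ⟨n - (d + 1), by omega⟩ with hc
      set c' : Fin n := ⟨n - d, by omega⟩ with hc'
      have hcc' : (c : ℕ) + 1 = (c' : ℕ) := by simp [hc, hc']; omega
      set g0 : G := (x c)⁻¹ * y c with hg0
      set y' : Fin n → G :=
        Function.update (Function.update y c (y c * g0⁻¹)) c' (g0 * y c') with hy'
      have hprod' : (List.ofFn y').prod = (List.ofFn y).prod := prod_sigma c c' hcc' g0 y
      have hne : c ≠ c' := fun h => by rw [h] at hcc'; omega
      have hy'c : y' c = x c := by
        rw [hy', Function.update_of_ne hne, Function.update_self, hg0]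
        simp [mul_assoc]
      have hagree' : ∀ m : Fin n, (m : ℕ) + d < n → x m = y' m := by
        intro m hm
        rcases eq_or_ne m c with rfl | hmc
        · exact hy'c.symm
        · have hmc' : m ≠ c' := by
            intro h
            rw [h] at hm
            simp [hc'] at hm
            omega
          rw [hy', Function.update_of_ne hmc', Function.update_of_ne hmc]
          apply hagree
          have : (m : ℕ) ≠ n - (d+1) := fun h => hmc (Fin.ext (by rw [h, hc]))
          omega
      obtain ⟨U, hU, hUk⟩ := ih x y' (hp.trans hprod'.symm) hagree'
      refine ⟨U * Qop G n c c' g0, mul_mem hU (Qop_mem c c' hcc' g0), ?_⟩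
      rw [Module.End.mul_apply, Qop_ket c c' hne g0 y, ← hy', hUk]

end Stmt2Aux
namespace Stmt2Aux
variable {G : Type} [Group G] [Fintype G] [DecidableEq G] {n : ℕ}

lemma Exy_mem (x y : Fin n → G) (hp : (List.ofFn x).prod = (List.ofFn y).prod) :
    Exy x y ∈ DRough G n := by
  obtain ⟨U, hU, hUk⟩ := reach n x y hp (fun m hm => absurd hm (by omega))
  have hE : Exy x y = U * Exy y y := by
    apply LinearMap.ext; intro f
    rw [Module.End.mul_apply, Exy_apply, Exy_apply, map_smul, hUk]
  rw [hE]
  exact mul_mem hU (Eyy_mem y)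

lemma T_decomp (T : Module.End ℂ (Hn G n)) :
    T = ∑ p : (Fin n → G) × (Fin n → G), (T (ket G n p.2)) p.1 • Exy p.1 p.2 := by
  apply LinearMap.ext; intro f
  rw [LinearMap.sum_apply]
  simp only [LinearMap.smul_apply, Exy_apply]
  rw [Fintype.sum_prod_type_right]
  conv_lhs => rw [expand f, map_sum]
  apply Finset.sum_congr rfl
  intro y _
  rw [map_smul]
  conv_lhs => rw [expand (T (ket G n y))]
  rw [Finset.smul_sum]
  apply Finset.sum_congr rfl
  intro x _
  rw [smul_comm]

end Stmt2Aux


/-- `𝔇ⁿ_rough` is exactly the algebra of `G`-graded endomorphisms of `H_n`: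
`T ∈ 𝔇ⁿ_rough` iff `T(V_g) ⊆ V_g` for every `g ∈ G`. -/
theorem stmt2 (hn : 1 ≤ n) (T : Module.End ℂ (Hn G n)) :
    T ∈ DRough G n ↔ ∀ g : G, ∀ v ∈ Vg G n g, T v ∈ Vg G n g := by
  constructor
  · intro hT
    exact Stmt2Aux.forward hT
  · intro hT
    rw [Stmt2Aux.T_decomp T]
    apply Subalgebra.sum_mem
    intro p _
    by_cases hc : (T (ket G n p.2)) p.1 = 0
    · rw [hc, zero_smul]; exact Subalgebra.zero_mem _
    · apply Subalgebra.smul_mem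
      apply Stmt2Aux.Exy_mem
      by_contra hne
      apply hc
      have h1 : T (ket G n p.2) ∈ Vg G n ((List.ofFn p.2).prod) :=
        hT _ _ (Stmt2Aux.ket_mem_Vg p.2)
      exact (Stmt2Aux.Vg_mem_iff _ _).1 h1 p.1 hne
end
end

section
/- The rough boundary algebra 𝔇ⁿ_rough is isomorphic as a ℂ-algebra to the direct sum, over the |G| elements g ∈ G, of full matrix algebras M_{|G|^{n−1}}(ℂ). -/
/-!
The total product `g₁ ⋯ gₙ` of a configuration is invariant under every `Q̃`-move, and the `P`'s
are diagonal, so `𝔇ⁿ_rough` consists of operators that preserve the level sets of the total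
product. Conversely, products of `P`'s give every diagonal matrix unit, and two configurations
with the same total product are joined by a chain of `Q̃`-moves (fix the labels one at a time from
the left), so every matrix unit inside a level set lies in `𝔇ⁿ_rough`. Hence `𝔇ⁿ_rough` is the
algebra of matrices that are block diagonal along the level sets, i.e. `⨁_{c ∈ G} End ℂ^{Sₙ(c)}`
with `Sₙ(c) = {x | x₁ ⋯ xₙ = c}`, and `|Sₙ(c)| = |G|^(n-1)` because `x₁` is determined by the
remaining labels.
-/

noncomputable section

open scoped BigOperators

variable (G : Type) [Group G] [Fintype G] [DecidableEq G] (n : ℕ)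

namespace Matrix

section Semiring

variable (R : Type*) [CommSemiring R] {ι κ : Type*} [Fintype ι] [DecidableEq ι]

def blockDiagonalSubalgebra (f : ι → κ) : Subalgebra R (Matrix ι ι R) where
  carrier := {M | ∀ i j, f i ≠ f j → M i j = 0}
  mul_mem' {M N} hM hN i j hij := by
    rw [mul_apply]
    refine Finset.sum_eq_zero fun k _ => ?_
    by_cases hik : f i = f k
    · rw [hN k j (hik ▸ hij), mul_zero]
    · rw [hM i k hik, zero_mul]
  add_mem' hM hN i j hij := by simp [hM i j hij, hN i j hij]
  algebraMap_mem' r i j hij := by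
    simp [algebraMap_eq_diagonal, diagonal_apply_ne _ (ne_of_apply_ne f hij)]

variable {R}

lemma single_mem_of_reflTransGen {A : Subalgebra R (Matrix ι ι R)} {r : ι → ι → Prop}
    (hdiag : ∀ i, single i i (1 : R) ∈ A) (hr : ∀ i j, r i j → single j i (1 : R) ∈ A)
    {i j : ι} (h : Relation.ReflTransGen r i j) : single j i (1 : R) ∈ A := by
  induction h with
  | refl => exact hdiag i
  | @tail j k _ hjk ih =>
    simpa using mul_mem (hr j k hjk) ih

lemma blockDiagonalSubalgebra_le {f : ι → κ} {A : Subalgebra R (Matrix ι ι R)}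
    (h : ∀ i j, f i = f j → single i j (1 : R) ∈ A) : blockDiagonalSubalgebra R f ≤ A := by
  intro M hM
  rw [matrix_eq_sum_single M]
  refine Subalgebra.sum_mem _ fun i _ => Subalgebra.sum_mem _ fun j _ => ?_
  by_cases hij : f i = f j
  · rw [← mul_one (M i j), ← smul_eq_mul, ← smul_single]
    exact Subalgebra.smul_mem _ (h i j hij) _
  · rw [hM i j hij, single_zero]
    exact zero_mem _

lemma single_self_mem_of_diagonal_mem {K X : Type*} [Fintype K] [DecidableEq K]
    [Fintype X] [DecidableEq X] {A : Subalgebra R (Matrix (K → X) (K → X) R)}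
    (h : ∀ k a, diagonal (fun z => if z k = a then 1 else 0) ∈ A) (x : K → X) :
    single x x (1 : R) ∈ A := by
  have hprod : (Pi.single x 1 : (K → X) → R) = ∏ k, fun z => if z k = x k then 1 else 0 := by
    ext z
    simp [Pi.single_apply, Finset.prod_ite_zero, funext_iff]
  rw [← diagonal_single, hprod]
  exact Subalgebra.prod_mem (A.comap (diagonalAlgHom R)) fun k _ => h k (x k)

end Semiring

variable (R : Type*) [CommRing R] {ι κ : Type*} [Fintype ι] [DecidableEq ι] [DecidableEq κ]

def blockDiagonalSubalgebraEquiv (f : ι → κ) :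
    blockDiagonalSubalgebra R f ≃ₐ[R] ∀ c, Matrix {i // f i = c} {i // f i = c} R where
  toFun M c := M.1.toBlock (f · = c) (f · = c)
  invFun N := ⟨of fun i j => if h : f j = f i then N (f i) ⟨i, rfl⟩ ⟨j, h⟩ else 0,
    fun i j hij => by simp [Ne.symm hij]⟩
  left_inv M := by
    ext i j
    by_cases h : f j = f i
    · simp [h]
    · simp [h, M.2 i j (Ne.symm h)]
  right_inv N := by
    ext c ⟨i, rfl⟩ ⟨j, hj⟩
    simp [hj]
  map_mul' M N := by
    ext1 c
    rw [Subalgebra.coe_mul, toBlock_mul_eq_add (q := (f · = c)), Pi.mul_apply, add_eq_left]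
    -- a block-diagonal matrix has no entries leaving the fibre `f ⁻¹' {c}`
    have hM : M.1.toBlock (f · = c) (fun i => ¬f i = c) = 0 := by
      ext ⟨i, hi⟩ ⟨j, hj⟩
      exact M.2 i j (hi ▸ Ne.symm hj)
    rw [hM, Matrix.zero_mul]
  map_add' M N := rfl
  commutes' r := by
    ext1 c
    simp [algebraMap_eq_diagonal, toBlock_diagonal_self]

end Matrix

namespace RoughBoundary

open Function Relation

section Moves

variable {Γ : Type*} [Group Γ] {m : ℕ}

def qMove (i j : Fin m) (g : Γ) (x : Fin m → Γ) : Fin m → Γ :=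
  update (update x i (x i * g)) j (g⁻¹ * x j)

lemma qMove_inv_qMove {i j : Fin m} (hij : i ≠ j) (g : Γ) (x : Fin m → Γ) :
    qMove i j g⁻¹ (qMove i j g x) = x := by
  funext w
  rcases eq_or_ne w j with rfl | hwj
  · simp [qMove]
  rcases eq_or_ne w i with rfl | hwi
  · simp [qMove, hij]
  · simp [qMove, hwi, hwj]

lemma qMove_succ_succ (i j : Fin m) (g a : Γ) (x : Fin m → Γ) :
    qMove i.succ j.succ g (Fin.cons a x) = Fin.cons a (qMove i j g x) := by
  simp only [qMove, Fin.cons_succ, Fin.cons_update]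

lemma qMove_zero_one (g a b : Γ) (x : Fin m → Γ) :
    qMove 0 1 g (Fin.cons a (Fin.cons b x) : Fin (m + 2) → Γ) =
      Fin.cons (a * g) (Fin.cons (g⁻¹ * b) x) := by
  rw [qMove, Fin.update_cons_zero, ← Fin.succ_zero_eq_one, ← Fin.cons_update, Fin.cons_succ,
    Fin.cons_zero, Fin.update_cons_zero, Fin.cons_zero]

lemma prod_ofFn_cons (a : Γ) (x : Fin m → Γ) :
    (List.ofFn (Fin.cons a x : Fin (m + 1) → Γ)).prod = a * (List.ofFn x).prod := by
  simp [List.ofFn_succ]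

lemma prod_ofFn_qMove {i j : Fin m} (hij : (i : ℕ) + 1 = j) (g : Γ) (x : Fin m → Γ) :
    (List.ofFn (qMove i j g x)).prod = (List.ofFn x).prod := by
  induction m with
  | zero => exact i.elim0
  | succ m ih =>
    cases x using Fin.consCases with | cons a x =>
    cases i using Fin.cases with
    | zero =>
      obtain ⟨m, rfl⟩ : ∃ k, m = k + 1 := ⟨m - 1, by omega⟩
      obtain rfl : j = 1 := Fin.ext (by simp [← hij])
      cases x using Fin.consCases with | cons b x =>
      simp only [qMove_zero_one, prod_ofFn_cons, mul_assoc, mul_inv_cancel_left]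
    | succ i =>
      obtain ⟨j, rfl⟩ : ∃ j', j = Fin.succ j' := ⟨j.pred (by rintro rfl; simp at hij),
        (Fin.succ_pred _ _).symm⟩
      rw [qMove_succ_succ, prod_ofFn_cons, prod_ofFn_cons, ih (by simpa using hij)]

def QStep (x y : Fin m → Γ) : Prop :=
  ∃ (i j : Fin m) (g : Γ), (i : ℕ) + 1 = j ∧ y = qMove i j g x

lemma qStep_cons {x y : Fin m → Γ} (h : QStep x y) (a : Γ) :
    QStep (Fin.cons a x : Fin (m + 1) → Γ) (Fin.cons a y) := by
  obtain ⟨i, j, g, hij, rfl⟩ := h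
  exact ⟨i.succ, j.succ, g, by simpa using hij, (qMove_succ_succ i j g a x).symm⟩

lemma reflTransGen_qStep_of_prod_eq :
    ∀ {m : ℕ} {x y : Fin m → Γ}, (List.ofFn x).prod = (List.ofFn y).prod →
      ReflTransGen QStep x y
  | 0, x, y, _ => by rw [Subsingleton.elim x y]
  | 1, x, y, h => by
    rw [show x = y from funext fun i => by simpa [Fin.fin_one_eq_zero i] using h]
  | m + 2, x, y, h => by
    cases x using Fin.consCases with | cons a x =>
    cases y using Fin.consCases with | cons b y =>
    -- one move at the first two sites makes the leading labels agree
    set x' := qMove 0 1 (a⁻¹ * b) (Fin.cons a x : Fin (m + 2) → Γ)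
    have hstep : QStep (Fin.cons a x) x' := ⟨0, 1, a⁻¹ * b, rfl, rfl⟩
    have hhead : x' 0 = b := by simp [x', qMove]
    have htail : (List.ofFn (Fin.tail x')).prod = (List.ofFn y).prod := by
      have : (List.ofFn x').prod = (List.ofFn (Fin.cons b y)).prod :=
        (prod_ofFn_qMove (i := 0) (j := 1) rfl _ _).trans h
      rw [← Fin.cons_self_tail x', hhead, prod_ofFn_cons, prod_ofFn_cons] at this
      exact mul_left_cancel this
    refine .head hstep ?_
    rw [← Fin.cons_self_tail x', hhead]
    exact (reflTransGen_qStep_of_prod_eq htail).lift _ fun _ _ h => qStep_cons h b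

def prodFiberEquivTail (c : Γ) :
    {x : Fin (m + 1) → Γ // (List.ofFn x).prod = c} ≃ (Fin m → Γ) where
  toFun x := Fin.tail x.1
  invFun y := ⟨Fin.cons (c * (List.ofFn y).prod⁻¹) y, by simp⟩
  left_inv := by
    rintro ⟨x, rfl⟩
    cases x using Fin.consCases with | cons a x =>
    simp
  right_inv y := Fin.tail_cons _ _

end Moves

section ToMatrix

open Matrix

lemma toMatrix'_diagOp {X : Type} [Fintype X] [DecidableEq X] {m : ℕ}
    (c : (Fin m → X) → ℂ) : LinearMap.toMatrix' (diagOp X m c) = diagonal c := by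
  ext x y
  simp [LinearMap.toMatrix'_apply, diagOp, diagonal_apply, Pi.single_apply]

lemma toMatrix'_permOp_apply {X : Type} [Fintype X] [DecidableEq X] {m : ℕ}
    (τ : (Fin m → X) → Fin m → X) (x y : Fin m → X) :
    LinearMap.toMatrix' (permOp X m τ) x y = if τ x = y then 1 else 0 := by
  simp [LinearMap.toMatrix'_apply, permOp, Pi.single_apply]

lemma Qop_eq_permOp_qMove {X : Type} [Group X] {m : ℕ} (i j : Fin m) (g : X) :
    Qop X m i j g = permOp X m (qMove i j g) :=
  rfl

variable {G n}

lemma toMatrix'_Qop_mul_single {i j : Fin n} (hij : i ≠ j) (g : G) (x : Fin n → G) :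
    LinearMap.toMatrix' (Qop G n i j g) * single x x 1 = single (qMove i j g⁻¹ x) x 1 := by
  have hpre : ∀ y, qMove i j g y = x ↔ qMove i j g⁻¹ x = y := by
    refine fun y => ⟨?_, ?_⟩ <;> rintro rfl
    · exact qMove_inv_qMove hij g y
    · simpa using qMove_inv_qMove hij g⁻¹ x
  ext y z
  by_cases hz : x = z
  · subst hz
    rw [mul_single_apply_same, Qop_eq_permOp_qMove, toMatrix'_permOp_apply, single_apply]
    simp [hpre]
  · rw [mul_single_apply_of_ne (hbj := Ne.symm hz), single_apply_of_col_ne _ _ hz]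

lemma map_toMatrixAlgEquiv'_dRough :
    (DRough G n).map (LinearMap.toMatrixAlgEquiv' : Module.End ℂ (Hn G n) ≃ₐ[ℂ] _).toAlgHom =
      blockDiagonalSubalgebra ℂ fun x : Fin n → G => (List.ofFn x).prod := by
  set e : Module.End ℂ (Hn G n) ≃ₐ[ℂ] Matrix (Fin n → G) (Fin n → G) ℂ :=
    LinearMap.toMatrixAlgEquiv'
  apply le_antisymm
  · refine Subalgebra.map_le.2 (Algebra.adjoin_le ?_)
    rintro T (⟨i, h, rfl⟩ | ⟨i, j, g, hij, rfl⟩) x y hxy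
    · change LinearMap.toMatrix' (Pop G n i h) x y = 0
      have hne : x ≠ y := by rintro rfl; exact hxy rfl
      rw [Pop, toMatrix'_diagOp, diagonal_apply_ne _ hne]
    · change LinearMap.toMatrix' (Qop G n i j g) x y = 0
      rw [Qop_eq_permOp_qMove, toMatrix'_permOp_apply, if_neg]
      rintro rfl
      exact hxy (prod_ofFn_qMove hij g x).symm
  · have hgen : ∀ T ∈ roughGens G n, e T ∈ (DRough G n).map e.toAlgHom :=
      fun T hT => ⟨T, Algebra.subset_adjoin hT, rfl⟩
    have hdiag : ∀ x, single x x (1 : ℂ) ∈ (DRough G n).map e.toAlgHom :=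
      single_self_mem_of_diagonal_mem fun k a => by
        rw [← toMatrix'_diagOp]
        exact hgen _ (Or.inl ⟨k, a, rfl⟩)
    refine blockDiagonalSubalgebra_le fun x y hxy =>
      single_mem_of_reflTransGen hdiag ?_ (reflTransGen_qStep_of_prod_eq hxy.symm)
    rintro z _ ⟨i, j, g, hij, rfl⟩
    rw [← inv_inv g, ← toMatrix'_Qop_mul_single (Fin.ne_of_val_ne (by omega))]
    exact mul_mem (hgen _ (Or.inr ⟨i, j, g⁻¹, hij, rfl⟩)) (hdiag z)

end ToMatrix

end RoughBoundary

/-- `𝔇ⁿ_rough` is isomorphic as a ℂ-algebra to the direct sum over the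
`|G|` elements `g ∈ G` of full matrix algebras `M_{|G|^(n-1)}(ℂ)`. -/
theorem stmt3 (hn : 1 ≤ n) :
    Nonempty (↥(DRough G n) ≃ₐ[ℂ]
      (G → Matrix (Fin (Fintype.card G ^ (n - 1))) (Fin (Fintype.card G ^ (n - 1))) ℂ)) := by
  obtain ⟨m, rfl⟩ : ∃ m, n = m + 1 := ⟨n - 1, by omega⟩
  have hfiber (c : G) :
      Fintype.card {x : Fin (m + 1) → G // (List.ofFn x).prod = c} =
        Fintype.card G ^ (m + 1 - 1) := by
    rw [Fintype.card_congr (RoughBoundary.prodFiberEquivTail c)]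
    simp
  exact ⟨(LinearMap.toMatrixAlgEquiv'.subalgebraMap (DRough G (m + 1))).trans <|
    (Subalgebra.equivOfEq _ _ RoughBoundary.map_toMatrixAlgEquiv'_dRough).trans <|
    (Matrix.blockDiagonalSubalgebraEquiv ℂ _).trans <|
    AlgEquiv.piCongrRight fun c => Matrix.reindexAlgEquiv ℂ ℂ (Fintype.equivFinOfCardEq (hfiber c))⟩
end
end

section
/- The algebra of all G-equivariant endomorphisms { T ∈ End_ℂ(H_N) : T U_g = U_g T for all g ∈ G } is generated as a unital ℂ-algebra by the single-site right translations R^g_v (for all sites v ∈ {1,…,N} and g ∈ G) together with the two-site operators Z^k_{i,j} (for all distinct i, j ∈ {1,…,N} and k ∈ G). -/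
noncomputable section

open scoped BigOperators

variable (G : Type) [Group G] [Fintype G] [DecidableEq G] (n : ℕ)

/-- `R^g_i`: right translation at site `i`, `|…, g_i, …⟩ ↦ |…, g_i g, …⟩`. -/
def Rop (i : Fin n) (g : G) : Module.End ℂ (Hn G n) :=
  permOp G n fun x => Function.update x i (x i * g⁻¹)

/-- `S̃^{(h)}` at sites `i` and `j` (used with `j = i + 1`): the projection onto
kets with `g_i⁻¹ g_j = h`. -/
def Sop (i j : Fin n) (h : G) : Module.End ℂ (Hn G n) :=
  diagOp G n fun x => if (x i)⁻¹ * x j = h then 1 else 0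

/-- `U_g`: the diagonal left translation `|g₁,…,g_n⟩ ↦ |g g₁,…,g g_n⟩`. -/
def Uop (g : G) : Module.End ℂ (Hn G n) :=
  permOp G n fun x k => g⁻¹ * x k

/-- Generators `R^g_i` and `S̃^{(h)}_i` of the smooth boundary algebra. -/
def smoothGens : Set (Module.End ℂ (Hn G n)) :=
  {T | ∃ (i : Fin n) (g : G), T = Rop G n i g} ∪
  {T | ∃ (i j : Fin n) (h : G), (i : ℕ) + 1 = (j : ℕ) ∧ T = Sop G n i j h}

/-- The smooth boundary algebra `𝔇ⁿ_smooth`. -/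
def DSmooth : Subalgebra ℂ (Module.End ℂ (Hn G n)) :=
  Algebra.adjoin ℂ (smoothGens G n)

/-- `Z^k_{i,j}`: the projection onto kets with `g_i⁻¹ g_j = k`. -/
def Zop (i j : Fin n) (k : G) : Module.End ℂ (Hn G n) :=
  diagOp G n fun x => if (x i)⁻¹ * x j = k then 1 else 0

set_option linter.unusedSectionVars false

namespace Stmt17Aux

variable {G} {n}

/-- The generating set of the statement. -/
def genSet (G : Type) [Group G] [Fintype G] [DecidableEq G] (n : ℕ) :
    Set (Module.End ℂ (Hn G n)) :=
  {T | ∃ (v : Fin n) (g : G), T = Rop G n v g} ∪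
  {T | ∃ (i j : Fin n) (k : G), i ≠ j ∧ T = Zop G n i j k}

lemma diagOp_apply (c : (Fin n → G) → ℂ) (f : Hn G n) (u : Fin n → G) :
    diagOp G n c f u = c u * f u := rfl

lemma permOp_apply (τ : (Fin n → G) → (Fin n → G)) (f : Hn G n) (u : Fin n → G) :
    permOp G n τ f u = f (τ u) := rfl

lemma permOp_mul (τ σ : (Fin n → G) → (Fin n → G)) :
    permOp G n τ * permOp G n σ = permOp G n (σ ∘ τ) := by
  apply LinearMap.ext; intro f; rfl

lemma diagOp_mul (c d : (Fin n → G) → ℂ) :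
    diagOp G n c * diagOp G n d = diagOp G n (fun u => c u * d u) := by
  apply LinearMap.ext; intro f; funext u
  simp [Module.End.mul_apply, diagOp_apply, mul_assoc]

lemma permOp_id : permOp G n (fun u => u) = 1 := rfl

lemma diagOp_one : diagOp G n (fun _ => (1:ℂ)) = 1 := by
  apply LinearMap.ext; intro f; funext u
  simp [diagOp_apply, Module.End.one_apply]

lemma perm_mem (s : Finset (Fin n)) (c : Fin n → G) :
    permOp G n (fun u j => if j ∈ s then u j * c j else u j) ∈
      Algebra.adjoin ℂ (genSet G n) := by
  classical
  induction s using Finset.induction_on with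
  | empty => simp only [Finset.notMem_empty, if_false]; rw [permOp_id]; exact one_mem _
  | @insert a s ha ih =>
      have heq : permOp G n (fun u j => if j ∈ insert a s then u j * c j else u j)
          = Rop G n a (c a)⁻¹ * permOp G n (fun u j => if j ∈ s then u j * c j else u j) := by
        rw [Rop, permOp_mul]
        congr 1
        funext u j
        by_cases hj : j ∈ s
        · have hja : j ≠ a := fun h => ha (h ▸ hj)
          simp [Function.update_apply, hj, hja, Finset.mem_insert]
        · by_cases hja : j = a
          · subst hja; simp [Function.update_apply, hj]
          · simp [Function.update_apply, hj, hja, Finset.mem_insert]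
      rw [heq]
      exact mul_mem (Algebra.subset_adjoin (Or.inl ⟨a, (c a)⁻¹, rfl⟩)) ih

lemma diag_mem (i0 : Fin n) (x : Fin n → G) (s : Finset (Fin n)) :
    diagOp G n (fun u => if ∀ i ∈ s, (u i0)⁻¹ * u i = (x i0)⁻¹ * x i then 1 else 0) ∈
      Algebra.adjoin ℂ (genSet G n) := by
  classical
  induction s using Finset.induction_on with
  | empty =>
      have : (fun u : Fin n → G =>
          if ∀ i ∈ (∅ : Finset (Fin n)), (u i0)⁻¹ * u i = (x i0)⁻¹ * x i then (1:ℂ) else 0)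
          = fun _ => (1:ℂ) := by
        funext u; simp
      rw [this, diagOp_one]; exact one_mem _
  | @insert a s ha ih =>
      have heq : diagOp G n
            (fun u => if ∀ i ∈ insert a s, (u i0)⁻¹ * u i = (x i0)⁻¹ * x i then (1:ℂ) else 0)
          = Zop G n i0 a ((x i0)⁻¹ * x a) *
            diagOp G n (fun u => if ∀ i ∈ s, (u i0)⁻¹ * u i = (x i0)⁻¹ * x i then 1 else 0) := by
        rw [Zop, diagOp_mul]
        congr 1
        funext u
        by_cases h1 : (u i0)⁻¹ * u a = (x i0)⁻¹ * x a <;>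
          by_cases h2 : ∀ i ∈ s, (u i0)⁻¹ * u i = (x i0)⁻¹ * x i <;>
          simp [Finset.forall_mem_insert, h1, h2]
      rw [heq]
      refine mul_mem ?_ ih
      by_cases hia : i0 = a
      · subst hia
        have : Zop G n i0 i0 ((x i0)⁻¹ * x i0) = 1 := by
          rw [Zop, ← diagOp_one]
          congr 1
          funext u
          simp
        rw [this]; exact one_mem _
      · exact Algebra.subset_adjoin (Or.inr ⟨i0, a, _, hia, rfl⟩)

/-- The operator `∑_{g ∈ G} E_{g·x, g·y}`. -/
def Wop (x y : Fin n → G) (i0 : Fin n) : Module.End ℂ (Hn G n) :=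
  diagOp G n (fun u => if ∀ i, (u i0)⁻¹ * u i = (x i0)⁻¹ * x i then 1 else 0) *
    permOp G n (fun u i => u i * ((x i)⁻¹ * y i))

lemma Wop_apply (x y : Fin n → G) (i0 : Fin n) (f : Hn G n) (u : Fin n → G) :
    Wop x y i0 f u =
      (if ∀ i, (u i0)⁻¹ * u i = (x i0)⁻¹ * x i then 1 else 0) *
        f (fun i => u i * ((x i)⁻¹ * y i)) := rfl

lemma Wop_mem (x y : Fin n → G) (i0 : Fin n) :
    Wop x y i0 ∈ Algebra.adjoin ℂ (genSet G n) := by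
  refine mul_mem ?_ ?_
  · have h := diag_mem i0 x Finset.univ
    have e : (fun u : Fin n → G =>
        if ∀ i ∈ Finset.univ, (u i0)⁻¹ * u i = (x i0)⁻¹ * x i then (1:ℂ) else 0)
        = fun u => if ∀ i, (u i0)⁻¹ * u i = (x i0)⁻¹ * x i then (1:ℂ) else 0 := by
      funext u; simp
    rwa [e] at h
  · have h := perm_mem Finset.univ (fun i => (x i)⁻¹ * y i)
    have e : (fun (u : Fin n → G) j => if j ∈ Finset.univ then u j * ((x j)⁻¹ * y j) else u j)
        = fun (u : Fin n → G) i => u i * ((x i)⁻¹ * y i) := by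
      funext u j; simp
    rwa [e] at h

def delta (y : Fin n → G) : Hn G n := fun u => if u = y then 1 else 0

lemma apply_eq_sum (T : Module.End ℂ (Hn G n)) (f : Hn G n) (u : Fin n → G) :
    T f u = ∑ y : Fin n → G, f y * T (delta y) u := by
  have hf : f = ∑ y : Fin n → G, f y • delta y := by
    funext v
    rw [Finset.sum_apply]
    simp [delta, mul_ite]
  conv_lhs => rw [hf, map_sum]
  rw [Finset.sum_apply]
  simp

lemma Uop_delta (g : G) (y : Fin n → G) :
    Uop G n g (delta y) = delta (fun i => g * y i) := by
  funext u
  show delta y (fun k => g⁻¹ * u k) = delta (fun i => g * y i) u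
  unfold delta
  congr 1
  simp only [eq_iff_iff, funext_iff]
  constructor
  · intro h i; have := h i; rw [inv_mul_eq_iff_eq_mul] at this; exact this
  · intro h i; rw [h i]; simp

lemma orbit_sum (i0 : Fin n) (u : Fin n → G) (A : (Fin n → G) → ℂ) :
    (∑ x : Fin n → G, if ∀ i, (u i0)⁻¹ * u i = (x i0)⁻¹ * x i then A x else 0)
      = ∑ h : G, A (fun i => h * u i) := by
  classical
  have h3 : (∑ x : Fin n → G, if ∀ i, (u i0)⁻¹ * u i = (x i0)⁻¹ * x i then A x else 0)
      = ∑ x ∈ Finset.univ.image (fun h : G => fun i : Fin n => h * u i),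
          (if ∀ i, (u i0)⁻¹ * u i = (x i0)⁻¹ * x i then A x else 0) := by
    refine (Finset.sum_subset (Finset.subset_univ _) ?_).symm
    intro x _ hx
    rw [if_neg]
    intro hP
    apply hx
    rw [Finset.mem_image]
    refine ⟨x i0 * (u i0)⁻¹, Finset.mem_univ _, ?_⟩
    funext i
    have := hP i
    rw [inv_mul_eq_iff_eq_mul] at this
    simp [this, mul_assoc]
  rw [h3, Finset.sum_image (fun a _ b _ hab => mul_right_cancel (congrFun hab i0))]
  apply Finset.sum_congr rfl
  intro h _
  rw [if_pos]
  intro i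
  simp [mul_assoc]

end Stmt17Aux

open Stmt17Aux

/-- the algebra of `G`-equivariant endomorphisms of `H_N` is generated
as a unital ℂ-algebra by the single-site right translations `R^g_v` and the two-site
operators `Z^k_{i,j}` (for `i ≠ j`). -/
theorem stmt17 (hn : 1 ≤ n) :
    Subalgebra.centralizer ℂ (Set.range (Uop G n)) =
      Algebra.adjoin ℂ
        ({T | ∃ (v : Fin n) (g : G), T = Rop G n v g} ∪
         {T | ∃ (i j : Fin n) (k : G), i ≠ j ∧ T = Zop G n i j k}) := by
  classical
  apply le_antisymm
  · -- centralizer ≤ adjoin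
    intro T hT
    rw [Subalgebra.mem_centralizer_iff] at hT
    have hcomm : ∀ g : G, Uop G n g * T = T * Uop G n g := fun g =>
      hT _ ⟨g, rfl⟩
    set i0 : Fin n := ⟨0, hn⟩ with hi0
    have ha : ∀ (h : G) (x y : Fin n → G),
        T (delta (fun i => h * y i)) (fun i => h * x i) = T (delta y) x := by
      intro h x y
      have hthis := congrFun (congrArg (· (delta y)) (hcomm h)) (fun i => h * x i)
      simp only [Module.End.mul_apply] at hthis
      rw [Uop_delta] at hthis
      rw [← hthis]
      show T (delta y) (fun k => h⁻¹ * ((fun i => h * x i) k)) = T (delta y) x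
      have harg : (fun k : Fin n => h⁻¹ * ((fun i => h * x i) k)) = x := by
        funext k; simp
      rw [harg]
    have key : T = (Fintype.card G : ℂ)⁻¹ •
        ∑ x : Fin n → G, ∑ y : Fin n → G, (T (delta y) x) • Wop x y i0 := by
      apply LinearMap.ext; intro f; funext u
      rw [apply_eq_sum T f u]
      have hrhs : ((Fintype.card G : ℂ)⁻¹ •
          ∑ x : Fin n → G, ∑ y : Fin n → G, (T (delta y) x) • Wop x y i0) f u
          = (Fintype.card G : ℂ)⁻¹ *
            ∑ x : Fin n → G, ∑ y : Fin n → G, (T (delta y) x) *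
              ((if ∀ i, (u i0)⁻¹ * u i = (x i0)⁻¹ * x i then 1 else 0) *
                f (fun i => u i * ((x i)⁻¹ * y i))) := by
        simp [LinearMap.sum_apply, Finset.sum_apply, Wop_apply, LinearMap.smul_apply]
      rw [hrhs]
      have step1 : ∀ x : Fin n → G,
          (∑ y : Fin n → G, (T (delta y) x) *
            ((if ∀ i, (u i0)⁻¹ * u i = (x i0)⁻¹ * x i then 1 else 0) *
              f (fun i => u i * ((x i)⁻¹ * y i))))
          = if ∀ i, (u i0)⁻¹ * u i = (x i0)⁻¹ * x i then
              (∑ y : Fin n → G, (T (delta y) x) * f (fun i => u i * ((x i)⁻¹ * y i)))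
            else 0 := by
        intro x
        split <;> simp
      rw [Finset.sum_congr rfl (fun x _ => step1 x),
        orbit_sum i0 u (fun x => ∑ y : Fin n → G, (T (delta y) x) * f (fun i => u i * ((x i)⁻¹ * y i)))]
      have step2 : ∀ h : G,
          (∑ y : Fin n → G, (T (delta y) (fun i => h * u i)) *
            f (fun i => u i * (((fun i => h * u i) i)⁻¹ * y i)))
          = ∑ y : Fin n → G, (T (delta y) u) * f y := by
        intro h
        have hbij : Function.Bijective (fun y : Fin n → G => fun i => h⁻¹ * y i) := by
          constructor
          · intro a b hab
            funext i
            exact mul_left_cancel (congrFun hab i)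
          · intro c
            exact ⟨fun i => h * c i, by funext i; simp⟩
        refine Fintype.sum_bijective _ hbij _ _ ?_
        intro y
        have harg : (fun i => u i * (((fun i => h * u i) i)⁻¹ * y i))
            = fun i => h⁻¹ * y i := by
          funext i
          simp [mul_inv_rev, ← mul_assoc]
        rw [harg]
        congr 1
        have := ha h u (fun i => h⁻¹ * y i)
        have hy : (fun i => h * ((fun i => h⁻¹ * y i) i)) = y := by
          funext i; simp
        rw [hy] at this
        exact this
      rw [Finset.sum_congr rfl (fun h _ => step2 h), Finset.sum_const]
      simp only [Finset.card_univ, nsmul_eq_mul]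
      rw [inv_mul_cancel_left₀ (Nat.cast_ne_zero.2 Fintype.card_ne_zero)]
      apply Finset.sum_congr rfl
      intro y _
      ring
    rw [key]
    exact Subalgebra.smul_mem _ (Subalgebra.sum_mem _ fun x _ =>
      Subalgebra.sum_mem _ fun y _ =>
        Subalgebra.smul_mem _ (Wop_mem x y i0) _) _
  · -- adjoin ≤ centralizer
    apply Algebra.adjoin_le
    rintro T (⟨i, g, rfl⟩ | ⟨i, j, k, hij, rfl⟩) <;>
      simp only [SetLike.mem_coe, Subalgebra.mem_centralizer_iff] <;> rintro U ⟨g', rfl⟩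
    · rw [Uop, Rop, permOp_mul, permOp_mul]
      congr 1
      funext u j
      by_cases hj : j = i
      · subst hj; simp [Function.update_apply, mul_assoc]
      · simp [Function.update_apply, hj]
    · apply LinearMap.ext; intro f; funext u
      show (Zop G n i j k f) (fun k' => g'⁻¹ * u k') = _
      rw [Zop]
      show (if (g'⁻¹ * u i)⁻¹ * (g'⁻¹ * u j) = k then 1 else 0) *
          f (fun k' => g'⁻¹ * u k')
        = (if (u i)⁻¹ * u j = k then 1 else 0) * f (fun k' => g'⁻¹ * u k')
      congr 2
      simp [mul_assoc]
end
end
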